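/- arXiv:1908.10902 — 5 statements merged into one kernel-verified Lean document; each statement's English description precedes it below -/
import Mathlib

section
/- Let G be a group that is the union of three proper subgroups G1, G2, G3. Then the square of every element of G lies in the intersection G1 ∩ G2 ∩ G3. -/
/-!
Fix one of the subgroups, say `A`. Since no group is a union of two proper subgroups, some `a`
lies outside `B ∪ C`, hence in `A`. For `g ∈ B \ A`, the element `a * g` can lie neither in `A`
nor in `B`, so it lies in `C`, which forces `g ∉ C`. Then `a * g ^ 2` lies neither in `B`
(else `a ∈ B`) nor in `C` (else `g = (a * g)⁻¹ * (a * g ^ 2) ∈ C`), so it lies in `A`, and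
therefore `g ^ 2 ∈ A`.
-/

namespace Subgroup

variable {G : Type*} [Group G]

theorem exists_notMem_notMem_of_ne_top {B C : Subgroup G} (hB : B ≠ ⊤) (hC : C ≠ ⊤) :
    ∃ a, a ∉ B ∧ a ∉ C := by
  by_contra! h
  have hcover : ((⊤ : Subgroup G) : Set G) ⊆ B ∪ C :=
    fun a _ ↦ or_iff_not_imp_left.2 (h a)
  rcases SubgroupClass.subset_union.1 hcover with hB' | hC'
  · exact hB (top_le_iff.1 hB')
  · exact hC (top_le_iff.1 hC')

theorem sq_mem_of_mem_of_notMem {A B C : Subgroup G} (hcover : ∀ g, g ∈ A ∨ g ∈ B ∨ g ∈ C)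
    {a g : G} (haA : a ∈ A) (haB : a ∉ B) (haC : a ∉ C) (hgA : g ∉ A) (hgB : g ∈ B) :
    g ^ 2 ∈ A := by
  have hagC : a * g ∈ C := by
    rcases hcover (a * g) with h | h | h
    · exact absurd ((A.mul_mem_cancel_left haA).1 h) hgA
    · exact absurd ((B.mul_mem_cancel_right hgB).1 h) haB
    · exact h
  have hgC : g ∉ C := fun hgC ↦ haC ((C.mul_mem_cancel_right hgC).1 hagC)
  rcases hcover (a * g ^ 2) with h | h | h
  · exact (A.mul_mem_cancel_left haA).1 h
  · exact absurd ((B.mul_mem_cancel_right (B.pow_mem hgB 2)).1 h) haB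
  · rw [sq, ← mul_assoc, C.mul_mem_cancel_left hagC] at h
    exact absurd h hgC

theorem sq_mem_of_cover_of_ne_top {A B C : Subgroup G} (hB : B ≠ ⊤) (hC : C ≠ ⊤)
    (hcover : ∀ g, g ∈ A ∨ g ∈ B ∨ g ∈ C) (g : G) : g ^ 2 ∈ A := by
  obtain ⟨a, haB, haC⟩ := exists_notMem_notMem_of_ne_top hB hC
  have haA : a ∈ A := (hcover a).resolve_right (not_or_intro haB haC)
  by_cases hgA : g ∈ A
  · exact A.pow_mem hgA 2
  rcases (hcover g).resolve_left hgA with hgB | hgC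
  · exact sq_mem_of_mem_of_notMem hcover haA haB haC hgA hgB
  · exact sq_mem_of_mem_of_notMem (fun g ↦ (hcover g).imp_right Or.symm) haA haC haB hgA hgC

end Subgroup

theorem square_mem_inter_of_union_three_proper_subgroups
    {G : Type*} [Group G] (G1 G2 G3 : Subgroup G)
    (h1 : G1 ≠ ⊤) (h2 : G2 ≠ ⊤) (h3 : G3 ≠ ⊤)
    (hcover : ∀ g : G, g ∈ G1 ∨ g ∈ G2 ∨ g ∈ G3) :
    ∀ g : G, g ^ 2 ∈ G1 ⊓ G2 ⊓ G3 := by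
  intro g
  refine ⟨⟨?_, ?_⟩, ?_⟩
  · exact Subgroup.sq_mem_of_cover_of_ne_top h2 h3 hcover g
  · exact Subgroup.sq_mem_of_cover_of_ne_top h1 h3 (fun g ↦ or_left_comm.1 (hcover g)) g
  · exact Subgroup.sq_mem_of_cover_of_ne_top h1 h2
      (fun g ↦ or_rotate.1 (or_rotate.1 (hcover g))) g
end

section
/- Let a1, a2, a3 be distinct reduced residues modulo q with a1² ≡ a2² ≡ a3² (mod q). Define H0 = {χ mod q : χ(a1)=χ(a2)=χ(a3)}, H1 = {χ : χ(a2)=χ(a3)=−χ(a1)}, H2 = {χ : χ(a1)=χ(a3)=−χ(a2)}, H3 = {χ : χ(a1)=χ(a2)=−χ(a3)}. Then H0, H1, H2, H3 partition the group of Dirichlet characters modulo q into four subsets each of cardinality φ(q)/4. -/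
/-- The four sets of Dirichlet characters associated to a special triple of residues. -/
def raceCharSet {q : ℕ} (a1 a2 a3 : (ZMod q)ˣ) : Fin 4 → Set (DirichletCharacter ℂ q)
  | 0 => {χ | χ a1 = χ a2 ∧ χ a2 = χ a3}
  | 1 => {χ | χ a2 = χ a3 ∧ χ a2 = -χ a1}
  | 2 => {χ | χ a1 = χ a3 ∧ χ a1 = -χ a2}
  | 3 => {χ | χ a1 = χ a2 ∧ χ a1 = -χ a3}

/-!
Write `a2 = a1 * b` and `a3 = a1 * c`. Then `b`, `c` and `b * c` are units of order exactly two,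
so every character takes the values `±1` at `b` and `c`, and `χ ∈ H_i` says exactly that
`(χ b, χ c)` is the `i`-th of the four sign pairs; this gives the partition. For the count, the
indicator of `H_i` at `χ` is `(1 + ε χ b) (1 + δ χ c) / 4`, where `(ε, δ)` is that sign pair.
Summing over `χ`, orthogonality (`∑ χ, χ x = 0` for `x ≠ 1`) leaves only `φ(q) / 4`.
-/

lemma MulChar.apply_eq_one_or_neg_one_of_sq_eq_one {R R' : Type*} [CommMonoid R] [CommRing R']
    [NoZeroDivisors R'] (χ : MulChar R R') {b : Rˣ} (hb : b ^ 2 = 1) :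
    χ b = 1 ∨ χ b = -1 :=
  mul_self_eq_one_iff.mp <| by rw [← map_mul, ← Units.val_mul, ← sq, hb, Units.val_one, map_one]

section RaceCharSet

variable {q : ℕ}

-- `(ZMod 0)ˣ = ℤˣ = {1, -1}` has no three distinct elements.
lemma neZero_of_three_distinct_units {a1 a2 a3 : (ZMod q)ˣ} (h12 : a1 ≠ a2) (h13 : a1 ≠ a3)
    (h23 : a2 ≠ a3) : NeZero q := by
  refine ⟨fun hq => ?_⟩
  subst hq
  rcases Int.units_eq_one_or a1 with rfl | rfl <;> rcases Int.units_eq_one_or a2 with rfl | rfl <;>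
    rcases Int.units_eq_one_or a3 with rfl | rfl <;> contradiction

def raceSigns : Fin 4 → ℂ × ℂ
  | 0 => (1, 1)
  | 1 => (-1, -1)
  | 2 => (-1, 1)
  | 3 => (1, -1)

lemma raceSigns_injective : Function.Injective raceSigns := by
  intro i j h
  fin_cases i <;> fin_cases j <;> first | rfl | norm_num [raceSigns] at h

lemma mem_raceCharSet_mul_iff (a b c : (ZMod q)ˣ) (χ : DirichletCharacter ℂ q) (i : Fin 4) :
    χ ∈ raceCharSet a (a * b) (a * c) i ↔ (χ b, χ c) = raceSigns i := by
  have ha : χ a ≠ 0 := (a.isUnit.map χ).ne_zero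
  fin_cases i <;> simp only [raceCharSet, raceSigns, Set.mem_ofPred_eq, Units.val_mul, map_mul,
    Prod.mk.injEq] <;> grind

lemma existsUnique_mem_raceCharSet (a : (ZMod q)ˣ) {b c : (ZMod q)ˣ} (hb : b ^ 2 = 1)
    (hc : c ^ 2 = 1) (χ : DirichletCharacter ℂ q) :
    ∃! i : Fin 4, χ ∈ raceCharSet a (a * b) (a * c) i := by
  simp only [mem_raceCharSet_mul_iff]
  refine existsUnique_of_exists_of_unique ?_ fun i j hi hj => raceSigns_injective (hi.symm.trans hj)
  rcases χ.apply_eq_one_or_neg_one_of_sq_eq_one hb with hχb | hχb <;>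
    rcases χ.apply_eq_one_or_neg_one_of_sq_eq_one hc with hχc | hχc <;>
    simp only [hχb, hχc]
  exacts [⟨0, rfl⟩, ⟨3, rfl⟩, ⟨2, rfl⟩, ⟨1, rfl⟩]

lemma ite_eq_raceSigns_eq_mul {s t : ℂ} (hs : s = 1 ∨ s = -1) (ht : t = 1 ∨ t = -1) (i : Fin 4) :
    (if (s, t) = raceSigns i then 4 else 0 : ℂ) =
      (1 + (raceSigns i).1 * s) * (1 + (raceSigns i).2 * t) := by
  rcases hs with rfl | rfl <;> rcases ht with rfl | rfl <;> fin_cases i <;> norm_num [raceSigns]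

lemma four_mul_card_raceCharSet [NeZero q] (a : (ZMod q)ˣ) {b c : (ZMod q)ˣ} (hb : b ^ 2 = 1)
    (hc : c ^ 2 = 1) (hb1 : b ≠ 1) (hc1 : c ≠ 1) (hbc1 : b * c ≠ 1) (i : Fin 4) :
    4 * Nat.card (raceCharSet a (a * b) (a * c) i) = q.totient := by
  classical
  have orth (x : (ZMod q)ˣ) (hx : x ≠ 1) : ∑ χ : DirichletCharacter ℂ q, χ x = 0 :=
    DirichletCharacter.sum_characters_eq_zero ℂ (by rwa [ne_eq, Units.val_eq_one])
  have total : ∑ _χ : DirichletCharacter ℂ q, (1 : ℂ) = q.totient := by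
    simpa using DirichletCharacter.sum_characters_eq ℂ (1 : ZMod q)
  set ε := (raceSigns i).1
  set δ := (raceSigns i).2
  apply Nat.cast_injective (R := ℂ)
  calc ((4 * Nat.card (raceCharSet a (a * b) (a * c) i) : ℕ) : ℂ)
      = ∑ χ : DirichletCharacter ℂ q, if χ ∈ raceCharSet a (a * b) (a * c) i then 4 else 0 := by
        rw [Nat.card_eq_fintype_card, Fintype.card_subtype, Finset.sum_ite, Finset.sum_const_zero]
        simp [mul_comm]
    _ = ∑ χ : DirichletCharacter ℂ q, (1 + ε * χ b) * (1 + δ * χ c) := by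
        refine Finset.sum_congr rfl fun χ _ => ?_
        rw [mem_raceCharSet_mul_iff]
        convert ite_eq_raceSigns_eq_mul (χ.apply_eq_one_or_neg_one_of_sq_eq_one hb)
          (χ.apply_eq_one_or_neg_one_of_sq_eq_one hc) i using 2
    _ = ∑ _χ : DirichletCharacter ℂ q, 1 + ε * ∑ χ : DirichletCharacter ℂ q, χ b +
          δ * ∑ χ : DirichletCharacter ℂ q, χ c +
          ε * δ * ∑ χ : DirichletCharacter ℂ q, χ ↑(b * c) := by
        simp only [Units.val_mul, map_mul, Finset.mul_sum, ← Finset.sum_add_distrib]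
        exact Finset.sum_congr rfl fun χ _ => by ring
    _ = q.totient := by rw [orth b hb1, orth c hc1, orth _ hbc1, total]; ring

end RaceCharSet

theorem raceCharSets_partition_and_card
    {q : ℕ} (a1 a2 a3 : (ZMod q)ˣ)
    (h12 : a1 ≠ a2) (h13 : a1 ≠ a3) (h23 : a2 ≠ a3)
    (hsq12 : a1 ^ 2 = a2 ^ 2) (hsq23 : a2 ^ 2 = a3 ^ 2) :
    (∀ χ : DirichletCharacter ℂ q, ∃! i : Fin 4, χ ∈ raceCharSet a1 a2 a3 i) ∧
    (∀ i : Fin 4, 4 * Nat.card (raceCharSet a1 a2 a3 i) = Nat.totient q) := by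
  have : NeZero q := neZero_of_three_distinct_units h12 h13 h23
  obtain ⟨b, rfl⟩ : ∃ b, a2 = a1 * b := ⟨a1⁻¹ * a2, by group⟩
  obtain ⟨c, rfl⟩ : ∃ c, a3 = a1 * c := ⟨a1⁻¹ * a3, by group⟩
  have hb : b ^ 2 = 1 := by simpa [mul_pow] using hsq12.symm
  have hc : c ^ 2 = 1 := by simpa [mul_pow, hb] using hsq23.symm
  have hb1 : b ≠ 1 := by rintro rfl; simp at h12
  have hc1 : c ≠ 1 := by rintro rfl; simp at h13
  have hbc1 : b * c ≠ 1 := by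
    intro hbc
    have hcb : c = b := by
      rw [← inv_eq_of_mul_eq_one_right hbc, inv_eq_of_mul_eq_one_right (by rwa [← sq])]
    exact h23 (by rw [hcb])
  exact ⟨existsUnique_mem_raceCharSet a1 hb hc, four_mul_card_raceCharSet a1 hb hc hb1 hc1 hbc1⟩
end

section
/- If r ≥ 4, then there do not exist distinct reduced residues a1, …, ar modulo q forming an almost unanimous set; that is, for any distinct reduced residues a1, …, ar modulo q there is some Dirichlet character χ mod q that is not almost unanimous on {a1,…,ar}. -/
/-- A Dirichlet character `χ` mod `q` is almost unanimous on a tuple of residues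
`a : Fin r → (ZMod q)ˣ` if it takes a common value at all indices except possibly one. -/
def AlmostUnanimousOn {q : ℕ} {r : ℕ} (χ : DirichletCharacter ℂ q)
    (a : Fin r → (ZMod q)ˣ) : Prop :=
  ∃ k : Fin r, ∃ ω : ℂ, ∀ i : Fin r, i ≠ k → χ (a i) = ω

lemma aux_unit_ne_zero {q : ℕ} (χ : DirichletCharacter ℂ q) (u : (ZMod q)ˣ) :
    χ (u : ZMod q) ≠ 0 := by
  intro h
  have h1 : χ ((u : ZMod q) * ((u⁻¹ : (ZMod q)ˣ) : ZMod q)) = 1 := by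
    rw [Units.mul_inv, map_one]
  rw [map_mul, h, zero_mul] at h1
  exact zero_ne_one h1

lemma aux_sep {q : ℕ} [NeZero q] {u v : (ZMod q)ˣ} (huv : u ≠ v) :
    ∃ χ : DirichletCharacter ℂ q, χ (u : ZMod q) ≠ χ (v : ZMod q) := by
  have h1 : ((u * v⁻¹ : (ZMod q)ˣ) : ZMod q) ≠ 1 := by
    intro h
    apply huv
    have : u * v⁻¹ = 1 := Units.ext (by simpa using h)
    rwa [mul_inv_eq_one] at this
  obtain ⟨χ, hχ⟩ := DirichletCharacter.exists_apply_ne_one_of_hasEnoughRootsOfUnity ℂ h1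
  refine ⟨χ, fun h => hχ ?_⟩
  have : ((u * v⁻¹ : (ZMod q)ˣ) : ZMod q) = (u : ZMod q) * ((v⁻¹ : (ZMod q)ˣ) : ZMod q) := by
    push_cast; ring
  rw [this, map_mul, h, ← map_mul]
  norm_cast
  rw [mul_inv_cancel, Units.val_one, map_one]

theorem no_almost_unanimous_set_of_four_or_more
    {q : ℕ} {r : ℕ} (hr : 4 ≤ r) (a : Fin r → (ZMod q)ˣ)
    (ha : Function.Injective a) :
    ¬ (∀ χ : DirichletCharacter ℂ q, AlmostUnanimousOn χ a) := by
  intro h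
  -- deal with q = 0 separately: only two units in ℤ
  rcases Nat.eq_zero_or_pos q with hq | hq
  · subst hq
    have i0 : (⟨0, by omega⟩ : Fin r) ≠ ⟨1, by omega⟩ := by simp [Fin.ext_iff]
    have i1 : (⟨0, by omega⟩ : Fin r) ≠ ⟨2, by omega⟩ := by simp [Fin.ext_iff]
    have i2 : (⟨1, by omega⟩ : Fin r) ≠ ⟨2, by omega⟩ := by simp [Fin.ext_iff]
    have h0 := Int.units_eq_one_or (a ⟨0, by omega⟩)
    have h1 := Int.units_eq_one_or (a ⟨1, by omega⟩)
    have h2 := Int.units_eq_one_or (a ⟨2, by omega⟩)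
    rcases h0 with h0 | h0 <;> rcases h1 with h1 | h1 <;> rcases h2 with h2 | h2
    · exact i0 (ha (h0.trans h1.symm))
    · exact i0 (ha (h0.trans h1.symm))
    · exact i1 (ha (h0.trans h2.symm))
    · exact i2 (ha (h1.trans h2.symm))
    · exact i2 (ha (h1.trans h2.symm))
    · exact i1 (ha (h0.trans h2.symm))
    · exact i0 (ha (h0.trans h1.symm))
    · exact i0 (ha (h0.trans h1.symm))
  have : NeZero q := ⟨hq.ne'⟩
  set j0 : Fin r := ⟨0, by omega⟩
  set j1 : Fin r := ⟨1, by omega⟩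
  set j2 : Fin r := ⟨2, by omega⟩
  set j3 : Fin r := ⟨3, by omega⟩
  have hd01 : a j0 ≠ a j1 := fun hc => by simpa [j0, j1, Fin.ext_iff] using ha hc
  have hd23 : a j2 ≠ a j3 := fun hc => by simpa [j2, j3, Fin.ext_iff] using ha hc
  obtain ⟨χ₁, hχ₁⟩ := aux_sep hd01
  obtain ⟨χ₂, hχ₂⟩ := aux_sep hd23
  -- χ₁ is constant on {j2, j3}
  have e1 : χ₁ (a j2 : ZMod q) = χ₁ (a j3 : ZMod q) := by
    obtain ⟨k, ω, hk⟩ := h χ₁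
    by_cases h2 : j2 = k
    · by_cases h3 : j3 = k
      · exact absurd (h2.trans h3.symm) (by simp [j2, j3, Fin.ext_iff])
      · exfalso
        exact hχ₁ ((hk j0 (by simp [j0, ← h2, Fin.ext_iff])).trans
          (hk j1 (by simp [j1, j2, ← h2, Fin.ext_iff])).symm)
    · by_cases h3 : j3 = k
      · exfalso
        exact hχ₁ ((hk j0 (by simp [j0, ← h3, Fin.ext_iff])).trans
          (hk j1 (by simp [j1, j3, ← h3, Fin.ext_iff])).symm)
      · exact (hk j2 h2).trans (hk j3 h3).symm
  -- χ₂ is constant on {j0, j1}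
  have e2 : χ₂ (a j0 : ZMod q) = χ₂ (a j1 : ZMod q) := by
    obtain ⟨k, ω, hk⟩ := h χ₂
    by_cases h0 : j0 = k
    · by_cases h1 : j1 = k
      · exact absurd (h0.trans h1.symm) (by simp [j0, j1, Fin.ext_iff])
      · exfalso
        exact hχ₂ ((hk j2 (by simp [j2, ← h0, Fin.ext_iff])).trans
          (hk j3 (by simp [j3, ← h0, Fin.ext_iff])).symm)
    · by_cases h1 : j1 = k
      · exfalso
        exact hχ₂ ((hk j2 (by simp [j2, j1, ← h1, Fin.ext_iff])).trans
          (hk j3 (by simp [j3, j1, ← h1, Fin.ext_iff])).symm)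
      · exact (hk j0 h0).trans (hk j1 h1).symm
  -- the product character differs on both pairs
  set χ : DirichletCharacter ℂ q := χ₁ * χ₂
  have hm : ∀ x : ZMod q, χ x = χ₁ x * χ₂ x := fun x => rfl
  have c01 : χ (a j0 : ZMod q) ≠ χ (a j1 : ZMod q) := by
    rw [hm, hm, ← e2]
    intro hc
    exact hχ₁ (mul_right_cancel₀ (aux_unit_ne_zero χ₂ (a j0)) hc)
  have c23 : χ (a j2 : ZMod q) ≠ χ (a j3 : ZMod q) := by
    rw [hm, hm, e1]
    intro hc
    exact hχ₂ (mul_left_cancel₀ (aux_unit_ne_zero χ₁ (a j3)) hc)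
  obtain ⟨k, ω, hk⟩ := h χ
  have k01 : k = j0 ∨ k = j1 := by
    by_contra hc
    push_neg at hc
    exact c01 ((hk j0 (Ne.symm hc.1)).trans (hk j1 (Ne.symm hc.2)).symm)
  have k23 : k = j2 ∨ k = j3 := by
    by_contra hc
    push_neg at hc
    exact c23 ((hk j2 (Ne.symm hc.1)).trans (hk j3 (Ne.symm hc.2)).symm)
  rcases k01 with rfl | rfl <;> rcases k23 with hc | hc <;>
    simp [j0, j1, j2, j3, Fin.ext_iff] at hc
end

section
/- Let a1, a2, a3 be distinct reduced residue classes modulo q. Then {a1, a2, a3} is almost unanimous mod q if and only if a1² ≡ a2² ≡ a3² (mod q). -/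
/-!
Let `Ĝ` be the character group of `G = (ℤ/qℤ)ˣ` and, for units `a, b`, let `Ĝ_{a,b}` be the
subgroup of characters with `χ a = χ b`. The triple is almost unanimous exactly when the three
subgroups `Ĝ_{a₁,a₂}`, `Ĝ_{a₁,a₃}`, `Ĝ_{a₂,a₃}` cover `Ĝ`; they are proper because characters
separate distinct units. A group covered by three subgroups, two of them proper, has all its
squares in the third, so `χ (a₁²) = χ (a₂²)` and `χ (a₂²) = χ (a₃²)` for every `χ`, and
separation again gives `a₁² = a₂² = a₃²`. Conversely, if the squares agree then the three values
`χ aᵢ` are square roots of one number, hence two of them coincide.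
-/

namespace Subgroup

variable {G : Type*} [Group G]

theorem sq_mem_of_forall_mem_or_mem_or_mem {A B C : Subgroup G}
    (hcover : ∀ g, g ∈ A ∨ g ∈ B ∨ g ∈ C) (hB : B ≠ ⊤) (hC : C ≠ ⊤) (g : G) : g ^ 2 ∈ A := by
  by_cases hgA : g ∈ A
  · exact A.pow_mem hgA 2
  obtain ⟨a, haB, haC⟩ := exists_notMem_notMem_of_ne_top hB hC
  have haA : a ∈ A := (hcover a).resolve_right (not_or.mpr ⟨haB, haC⟩)
  have hg : g ∈ B ∨ g ∈ C := (hcover g).resolve_left hgA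
  have hga : g * a ∈ B ∨ g * a ∈ C :=
    (hcover (g * a)).resolve_left (by rwa [A.mul_mem_cancel_right haA])
  -- `g` and `g * a` lie in different ones of `B`, `C`, which rules out `g * (g * a)` for both.
  have key : ∀ H K : Subgroup G, a ∉ H → a ∉ K → (g ∈ H ∨ g ∈ K) →
      (g * a ∈ H ∨ g * a ∈ K) → g * (g * a) ∉ H := by
    intro H K haH haK hg hga hH
    have hgH : g ∉ H := fun hgH =>
      haH ((H.mul_mem_cancel_left hgH).mp ((H.mul_mem_cancel_left hgH).mp hH))
    have hgaH : g * a ∉ H := fun hgaH => hgH ((H.mul_mem_cancel_right hgaH).mp hH)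
    exact haK ((K.mul_mem_cancel_left (hg.resolve_left hgH)).mp (hga.resolve_left hgaH))
  rcases hcover (g * (g * a)) with h | h | h
  · rw [← mul_assoc, ← sq] at h
    exact (A.mul_mem_cancel_right haA).mp h
  · exact absurd h (key B C haB haC hg hga)
  · exact absurd h (key C B haC haB hg.symm hga.symm)

end Subgroup

namespace CommGroup

open MonoidHom

variable {G R : Type*} [CommGroup G] [CommMonoid R]

theorem mem_eqLocus_eval {a b : G} {φ : G →* Rˣ} : φ ∈ (eval a).eqLocus (eval b) ↔ φ a = φ b :=
  Iff.rfl

variable [Finite G] [HasEnoughRootsOfUnity R (Monoid.exponent G)]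

theorem eqLocus_eval_ne_top {a b : G} (hab : a ≠ b) :
    (eval a).eqLocus (eval b) ≠ (⊤ : Subgroup (G →* Rˣ)) := by
  obtain ⟨φ, hφ⟩ := not_forall.mp (mt (forall_apply_eq_apply_iff G (M := R)).mp hab)
  exact mt (Subgroup.eq_top_iff' _).mp (not_forall.mpr ⟨φ, hφ⟩)

theorem sq_eq_sq_of_forall_sq_mem_eqLocus_eval {a b : G}
    (h : ∀ φ : G →* Rˣ, φ ^ 2 ∈ (eval a).eqLocus (eval b)) : a ^ 2 = b ^ 2 :=
  (forall_apply_eq_apply_iff G).mp fun φ => by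
    simpa only [mem_eqLocus_eval, pow_apply, map_pow] using h φ

theorem sq_eq_sq_of_forall_apply_eq_or {a₁ a₂ a₃ : G}
    (h₁₂ : a₁ ≠ a₂) (h₁₃ : a₁ ≠ a₃) (h₂₃ : a₂ ≠ a₃)
    (h : ∀ φ : G →* Rˣ, φ a₁ = φ a₂ ∨ φ a₁ = φ a₃ ∨ φ a₂ = φ a₃) :
    a₁ ^ 2 = a₂ ^ 2 ∧ a₂ ^ 2 = a₃ ^ 2 := by
  have hcover : ∀ φ : G →* Rˣ, φ ∈ (eval a₁).eqLocus (eval a₂) ∨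
      φ ∈ (eval a₁).eqLocus (eval a₃) ∨ φ ∈ (eval a₂).eqLocus (eval a₃) := h
  exact ⟨sq_eq_sq_of_forall_sq_mem_eqLocus_eval <| Subgroup.sq_mem_of_forall_mem_or_mem_or_mem
      hcover (eqLocus_eval_ne_top h₁₃) (eqLocus_eval_ne_top h₂₃),
    sq_eq_sq_of_forall_sq_mem_eqLocus_eval <| Subgroup.sq_mem_of_forall_mem_or_mem_or_mem
      (fun φ => (hcover φ).rotate.rotate) (eqLocus_eval_ne_top h₁₂) (eqLocus_eval_ne_top h₁₃)⟩

end CommGroup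

theorem eq_or_eq_or_eq_of_sq_eq_sq {R : Type*} [CommRing R] [NoZeroDivisors R] {x y z : R}
    (hxy : x ^ 2 = y ^ 2) (hyz : y ^ 2 = z ^ 2) : x = y ∨ x = z ∨ y = z := by
  rcases sq_eq_sq_iff_eq_or_eq_neg.mp hxy with hxy | hxy
  · exact Or.inl hxy
  rcases sq_eq_sq_iff_eq_or_eq_neg.mp hyz with hyz | hyz
  · exact Or.inr (Or.inr hyz)
  · exact Or.inr (Or.inl (by rw [hxy, hyz, neg_neg]))

theorem almost_unanimous_triple_iff_equal_squares
    {q : ℕ} (a1 a2 a3 : (ZMod q)ˣ)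
    (h12 : a1 ≠ a2) (h13 : a1 ≠ a3) (h23 : a2 ≠ a3) :
    (∀ χ : DirichletCharacter ℂ q,
        χ a1 = χ a2 ∨ χ a1 = χ a3 ∨ χ a2 = χ a3) ↔
      (a1 ^ 2 = a2 ^ 2 ∧ a2 ^ 2 = a3 ^ 2) := by
  constructor
  · intro h
    refine CommGroup.sq_eq_sq_of_forall_apply_eq_or (R := ℂ) h12 h13 h23 fun φ => ?_
    simpa [Units.ext_iff] using h (MulChar.ofUnitHom φ)
  · rintro ⟨e12, e23⟩ χ
    apply eq_or_eq_or_eq_of_sq_eq_sq <;>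
      simp only [← map_pow, ← Units.val_pow_eq_pow_val, e12, e23]
end

section
/- Let N_a, N_b, N_c be mutually independent centered real Gaussian random variables with variances a, b, c > 0 respectively. Then P(N_a > N_b > N_c) = (1/(2π))·arctan(√(ab + bc + ac)/b). -/
/-!
`X = Na - Nb` and `Z = b Na + a Nb - (a + b) Nc` are jointly Gaussian and uncorrelated, hence
independent, with variances `a + b` and `(a + b) (ab + bc + ac)`; the event is `{0 < X, b X < Z}`.
After normalising `X` and `Z`, this is the mass of the wedge `{0 < x, k x < y}`,
`k = b / √(ab + bc + ac)`, under the standard Gaussian measure of the plane. That measure has a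
radial density, so in polar coordinates a sector gets a mass proportional to its angle, here
`π / 2 - arctan k = arctan k⁻¹`, and the constant is `1 / (2π)` because the plane has mass one.
-/

open MeasureTheory ProbabilityTheory Real Set
open scoped NNReal ENNReal

def wedge (k : ℝ) : Set (ℝ × ℝ) := {p | 0 < p.1 ∧ k * p.1 < p.2}

lemma measurableSet_wedge (k : ℝ) : MeasurableSet (wedge k) :=
  (measurableSet_lt measurable_const measurable_fst).inter
    (measurableSet_lt (measurable_const.mul measurable_fst) measurable_snd)

lemma polarCoord_symm_mem_wedge_iff {k r θ : ℝ} (hr : 0 < r) (hθ : θ ∈ Ioo (-π) π) :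
    polarCoord.symm (r, θ) ∈ wedge k ↔ θ ∈ Ioo (arctan k) (π / 2) := by
  have hcos : 0 < cos θ ↔ θ ∈ Ioo (-(π / 2)) (π / 2) := by
    refine ⟨fun h => ⟨?_, ?_⟩, cos_pos_of_mem_Ioo⟩
    · by_contra! h'
      have := cos_nonpos_of_pi_div_two_le_of_le (x := -θ) (by linarith) (by linarith [hθ.1])
      rw [cos_neg] at this
      linarith
    · by_contra! h'
      have := cos_nonpos_of_pi_div_two_le_of_le h' (by linarith [hθ.2])
      linarith
  simp only [wedge, polarCoord_symm_apply, mem_ofPred_eq]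
  rw [mul_pos_iff_of_pos_left hr, mul_left_comm, mul_lt_mul_iff_right₀ hr]
  constructor
  · rintro ⟨hc, hk⟩
    obtain ⟨h₁, h₂⟩ := hcos.1 hc
    refine ⟨?_, h₂⟩
    rwa [← arctan_tan h₁ h₂, arctan_lt_arctan_iff, tan_eq_sin_div_cos, lt_div_iff₀ hc]
  · rintro ⟨h₁, h₂⟩
    have h₁' : -(π / 2) < θ := (neg_pi_div_two_lt_arctan k).trans h₁
    have hc := cos_pos_of_mem_Ioo ⟨h₁', h₂⟩
    refine ⟨hc, ?_⟩
    rwa [← arctan_tan h₁' h₂, arctan_lt_arctan_iff, tan_eq_sin_div_cos, lt_div_iff₀ hc] at h₁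

lemma withDensity_radial_apply_of_polarCoord {g : ℝ → ℝ≥0∞} (hg : Measurable g)
    {s : Set (ℝ × ℝ)} (hs : MeasurableSet s) {α β : ℝ} (hα : -π ≤ α) (hβ : β ≤ π)
    (hsector : ∀ r θ, 0 < r → θ ∈ Ioo (-π) π → (polarCoord.symm (r, θ) ∈ s ↔ θ ∈ Ioo α β)) :
    volume.withDensity (fun p : ℝ × ℝ => g (p.1 ^ 2 + p.2 ^ 2)) s
      = (∫⁻ r in Ioi 0, ENNReal.ofReal r * g (r ^ 2)) * ENNReal.ofReal (β - α) := by
  have hsub : Ioi (0 : ℝ) ×ˢ Ioo α β ⊆ polarCoord.target := by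
    rw [polarCoord_target]
    exact prod_mono subset_rfl (Ioo_subset_Ioo hα hβ)
  rw [withDensity_apply _ hs, ← lintegral_indicator hs, ← lintegral_comp_polarCoord_symm]
  calc ∫⁻ p in polarCoord.target, ENNReal.ofReal p.1 •
          s.indicator (fun p : ℝ × ℝ => g (p.1 ^ 2 + p.2 ^ 2)) (polarCoord.symm p)
      = ∫⁻ p in polarCoord.target, (Ioi (0 : ℝ) ×ˢ Ioo α β).indicator
          (fun p => ENNReal.ofReal p.1 * g (p.1 ^ 2) * 1) p := by
        refine setLIntegral_congr_fun polarCoord.open_target.measurableSet fun p hp => ?_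
        rw [polarCoord_target] at hp
        have hsec := hsector p.1 p.2 hp.1 hp.2
        rw [polarCoord_symm_apply] at hsec
        have hr : p.1 ^ 2 * cos p.2 ^ 2 + p.1 ^ 2 * sin p.2 ^ 2 = p.1 ^ 2 := by
          rw [← mul_add, cos_sq_add_sin_sq, mul_one]
        by_cases hθ : p.2 ∈ Ioo α β
        · simp [indicator_of_mem, hsec.2 hθ, mem_prod, hp.1, hθ, mul_pow, hr]
        · simp [indicator_of_notMem, hsec.not.2 hθ, mem_prod, hθ]
    _ = ∫⁻ p in Ioi (0 : ℝ) ×ˢ Ioo α β, ENNReal.ofReal p.1 * g (p.1 ^ 2) * 1 := by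
        rw [setLIntegral_indicator (measurableSet_Ioi.prod measurableSet_Ioo),
          inter_eq_left.2 hsub]
    _ = (∫⁻ r in Ioi 0, ENNReal.ofReal r * g (r ^ 2)) * ENNReal.ofReal (β - α) := by
        rw [Measure.volume_eq_prod, ← Measure.prod_restrict,
          lintegral_prod_mul (f := fun r => ENNReal.ofReal r * g (r ^ 2)) (g := fun _ => 1)
            (by fun_prop) aemeasurable_const, setLIntegral_const, one_mul, Real.volume_Ioo]

lemma gaussianReal_prod_gaussianReal_eq_withDensity :
    (gaussianReal 0 1).prod (gaussianReal 0 1) = volume.withDensity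
      (fun p : ℝ × ℝ => ENNReal.ofReal ((2 * π)⁻¹ * exp (-(p.1 ^ 2 + p.2 ^ 2) / 2))) := by
  rw [gaussianReal_of_var_ne_zero 0 one_ne_zero, prod_withDensity (measurable_gaussianPDF 0 1)
    (measurable_gaussianPDF 0 1), ← Measure.volume_eq_prod]
  congr 1
  ext p
  have h2π : (√(2 * π))⁻¹ * (√(2 * π))⁻¹ = (2 * π)⁻¹ := by
    rw [← mul_inv, mul_self_sqrt (by positivity)]
  simp only [gaussianPDF, gaussianPDFReal, NNReal.coe_one, mul_one, sub_zero]
  rw [← ENNReal.ofReal_mul (by positivity)]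
  congr 1
  rw [show -(p.1 ^ 2 + p.2 ^ 2) / 2 = -p.1 ^ 2 / 2 + -p.2 ^ 2 / 2 by ring, exp_add]
  linear_combination exp (-p.1 ^ 2 / 2) * exp (-p.2 ^ 2 / 2) * h2π

lemma gaussianReal_prod_gaussianReal_wedge (k : ℝ) :
    (gaussianReal 0 1).prod (gaussianReal 0 1) (wedge k)
      = ENNReal.ofReal ((π / 2 - arctan k) / (2 * π)) := by
  set g : ℝ → ℝ≥0∞ := fun t => ENNReal.ofReal ((2 * π)⁻¹ * exp (-t / 2))
  have hg : Measurable g := by fun_prop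
  have hμ : (gaussianReal 0 1).prod (gaussianReal 0 1)
      = volume.withDensity (fun p : ℝ × ℝ => g (p.1 ^ 2 + p.2 ^ 2)) :=
    gaussianReal_prod_gaussianReal_eq_withDensity
  have htotal : (∫⁻ r in Ioi 0, ENNReal.ofReal r * g (r ^ 2)) * ENNReal.ofReal (2 * π) = 1 := by
    have := withDensity_radial_apply_of_polarCoord hg MeasurableSet.univ le_rfl le_rfl
      (fun r θ _ hθ => iff_of_true (mem_univ _) hθ)
    rw [← hμ, measure_univ, show π - -π = 2 * π by ring] at this
    exact this.symm
  rw [hμ, withDensity_radial_apply_of_polarCoord hg (measurableSet_wedge k)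
      (by linarith [pi_pos, neg_pi_div_two_lt_arctan k]) (by linarith [pi_pos])
      (fun r θ hr hθ => polarCoord_symm_mem_wedge_iff hr hθ),
    ENNReal.eq_inv_of_mul_eq_one_left htotal, ENNReal.ofReal_div_of_pos (by positivity),
    mul_comm, ← div_eq_mul_inv]

lemma gaussianReal_zero_eq_map_sqrt_mul (v : ℝ≥0) :
    gaussianReal 0 v = (gaussianReal 0 1).map (fun x => √(v : ℝ) * x) := by
  rw [gaussianReal_map_const_mul, mul_zero, mul_one]
  congr
  ext
  simp

lemma gaussianReal_prod_gaussianReal_wedge_of_ne_zero {v w : ℝ≥0} (hv : v ≠ 0) (hw : w ≠ 0)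
    (k : ℝ) :
    (gaussianReal 0 v).prod (gaussianReal 0 w) (wedge k)
      = ENNReal.ofReal ((π / 2 - arctan (k * √(v : ℝ) / √(w : ℝ))) / (2 * π)) := by
  have hv' : 0 < √(v : ℝ) := sqrt_pos.2 (NNReal.coe_pos.2 (pos_iff_ne_zero.2 hv))
  have hw' : 0 < √(w : ℝ) := sqrt_pos.2 (NNReal.coe_pos.2 (pos_iff_ne_zero.2 hw))
  rw [gaussianReal_zero_eq_map_sqrt_mul v, gaussianReal_zero_eq_map_sqrt_mul w,
    Measure.map_prod_map _ _ (by fun_prop) (by fun_prop),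
    Measure.map_apply (by fun_prop) (measurableSet_wedge k),
    ← gaussianReal_prod_gaussianReal_wedge]
  congr 1
  ext p
  simp only [wedge, mem_preimage, Prod.map_fst, Prod.map_snd, mem_ofPred_eq,
    mul_pos_iff_of_pos_left hv']
  rw [div_mul_eq_mul_div, div_lt_iff₀ hw', mul_right_comm, mul_assoc, mul_comm (√(w : ℝ)),
    mul_comm p.1]

namespace ProbabilityTheory

variable {Ω : Type*} {mΩ : MeasurableSpace Ω} {P : Measure Ω}

lemma hasLaw_of_map_eq {𝓧 : Type*} {m𝓧 : MeasurableSpace 𝓧} {X : Ω → 𝓧} {μ : Measure 𝓧}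
    [NeZero μ] (h : P.map X = μ) : HasLaw X μ P :=
  ⟨.of_map_ne_zero (h ▸ NeZero.ne μ), h⟩

section LinearCombination

variable {ι : Type*} [Fintype ι] {X : ι → Ω → ℝ}

lemma iIndepFun.hasGaussianLaw_sum_mul_prodMk (hX : ∀ i, HasGaussianLaw (X i) P)
    (hind : iIndepFun X P) (u w : ι → ℝ) :
    HasGaussianLaw (fun ω => (∑ i, u i * X i ω, ∑ i, w i * X i ω)) P := by
  simpa using (hind.hasGaussianLaw hX).map_fun
    ((∑ i, u i • ContinuousLinearMap.proj (R := ℝ) (φ := fun _ : ι => ℝ) i).prod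
      (∑ i, w i • ContinuousLinearMap.proj (R := ℝ) (φ := fun _ : ι => ℝ) i))

variable [IsProbabilityMeasure P]

lemma iIndepFun.covariance_sum_mul_sum_mul (hX : ∀ i, MemLp (X i) 2 P) (hind : iIndepFun X P)
    (u w : ι → ℝ) :
    cov[fun ω => ∑ i, u i * X i ω, fun ω => ∑ i, w i * X i ω; P]
      = ∑ i, u i * w i * Var[X i; P] := by
  rw [covariance_fun_sum_fun_sum (fun i => (hX i).const_mul (u i))
    (fun i => (hX i).const_mul (w i))]
  refine Finset.sum_congr rfl fun i _ => ?_
  rw [Finset.sum_eq_single i]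
  · rw [covariance_const_mul_left, covariance_const_mul_right,
      covariance_self (hX i).aestronglyMeasurable.aemeasurable]
    ring
  · intro j _ hji
    rw [covariance_const_mul_left, covariance_const_mul_right,
      (hind.indepFun hji.symm).covariance_eq_zero (hX i) (hX j), mul_zero, mul_zero]
  · simp

variable {v : ι → ℝ≥0}

lemma iIndepFun.hasLaw_sum_mul_gaussianReal (hX : ∀ i, HasLaw (X i) (gaussianReal 0 (v i)) P)
    (hind : iIndepFun X P) (u : ι → ℝ) :
    HasLaw (fun ω => ∑ i, u i * X i ω) (gaussianReal 0 (∑ i, u i ^ 2 * v i).toNNReal) P := by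
  have hG := (hind.hasGaussianLaw_sum_mul_prodMk (fun i => (hX i).hasGaussianLaw) u u).fst
  refine ⟨hG.aemeasurable, ?_⟩
  have hmean : P[fun ω => ∑ i, u i * X i ω] = 0 := by
    rw [integral_finsetSum _ fun i _ => ((hX i).hasGaussianLaw.integrable).const_mul (u i)]
    refine Finset.sum_eq_zero fun i _ => ?_
    rw [integral_const_mul, (hX i).integral_eq, integral_id_gaussianReal, mul_zero]
  rw [hG.map_eq_gaussianReal, hmean, ← covariance_self hG.aemeasurable,
    hind.covariance_sum_mul_sum_mul (fun i => (hX i).hasGaussianLaw.memLp_two)]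
  simp [(hX _).variance_eq, variance_id_gaussianReal, sq]

lemma iIndepFun.indepFun_sum_mul_of_sum_mul_mul_eq_zero
    (hX : ∀ i, HasLaw (X i) (gaussianReal 0 (v i)) P) (hind : iIndepFun X P) {u w : ι → ℝ}
    (huw : ∑ i, u i * w i * v i = 0) :
    IndepFun (fun ω => ∑ i, u i * X i ω) (fun ω => ∑ i, w i * X i ω) P := by
  refine (hind.hasGaussianLaw_sum_mul_prodMk (fun i => (hX i).hasGaussianLaw) u w)
    |>.indepFun_of_covariance_eq_zero ?_
  rw [hind.covariance_sum_mul_sum_mul (fun i => (hX i).hasGaussianLaw.memLp_two)]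
  simpa [(hX _).variance_eq, variance_id_gaussianReal] using huw

end LinearCombination

lemma IndepFun.measure_pos_and_mul_lt_of_hasLaw_gaussianReal [IsProbabilityMeasure P]
    {X Z : Ω → ℝ} {v w : ℝ≥0} (hv : v ≠ 0) (hw : w ≠ 0) (hX : HasLaw X (gaussianReal 0 v) P)
    (hZ : HasLaw Z (gaussianReal 0 w) P) (hXZ : IndepFun X Z P) (k : ℝ) :
    P {ω | 0 < X ω ∧ k * X ω < Z ω}
      = ENNReal.ofReal ((π / 2 - arctan (k * √(v : ℝ) / √(w : ℝ))) / (2 * π)) :=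
  (((indepFun_iff_hasLaw_prodMk_prod hX hZ).1 hXZ).measure_eq (measurableSet_wedge k)).trans
    (gaussianReal_prod_gaussianReal_wedge_of_ne_zero hv hw k)

end ProbabilityTheory

theorem gaussian_three_way_ordering_probability_general
    {Ω : Type*} [MeasureSpace Ω] [IsProbabilityMeasure (ℙ : Measure Ω)]
    (a b c : ℝ≥0) (ha : 0 < a) (hb : 0 < b)
    (Na Nb Nc : Ω → ℝ)
    (hNa : Measure.map Na ℙ = gaussianReal 0 a)
    (hNb : Measure.map Nb ℙ = gaussianReal 0 b)
    (hNc : Measure.map Nc ℙ = gaussianReal 0 c)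
    (hindep : iIndepFun ![Na, Nb, Nc] ℙ) :
    ℙ {ω | Nb ω < Na ω ∧ Nc ω < Nb ω}
      = ENNReal.ofReal
          ((1 / (2 * π)) * arctan (Real.sqrt ((a : ℝ) * b + b * c + a * c) / b)) := by
  have hlaw : ∀ i, HasLaw (![Na, Nb, Nc] i) (gaussianReal 0 (![a, b, c] i)) ℙ := by
    intro i
    fin_cases i
    exacts [hasLaw_of_map_eq hNa, hasLaw_of_map_eq hNb, hasLaw_of_map_eq hNc]
  set u : Fin 3 → ℝ := ![1, -1, 0]
  set w : Fin 3 → ℝ := ![b, a, -(a + b)]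
  have hab : (0 : ℝ) < a + b := by positivity
  have hS : (0 : ℝ) < a * b + b * c + a * c := by positivity
  have hX : HasLaw (fun ω => ∑ i, u i * ![Na, Nb, Nc] i ω)
      (gaussianReal 0 ((a : ℝ) + b).toNNReal) ℙ := by
    convert hindep.hasLaw_sum_mul_gaussianReal hlaw u using 3
    simp [u, Fin.sum_univ_three]
  have hZ : HasLaw (fun ω => ∑ i, w i * ![Na, Nb, Nc] i ω)
      (gaussianReal 0 (((a : ℝ) + b) * (a * b + b * c + a * c)).toNNReal) ℙ := by
    convert hindep.hasLaw_sum_mul_gaussianReal hlaw w using 3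
    simp [w, Fin.sum_univ_three]
    ring
  have hXZ := hindep.indepFun_sum_mul_of_sum_mul_mul_eq_zero hlaw (u := u) (w := w)
    (by simp [u, w, Fin.sum_univ_three]; ring)
  have hevent : {ω | Nb ω < Na ω ∧ Nc ω < Nb ω} = {ω | 0 < ∑ i, u i * ![Na, Nb, Nc] i ω ∧
      b * ∑ i, u i * ![Na, Nb, Nc] i ω < ∑ i, w i * ![Na, Nb, Nc] i ω} := by
    ext ω
    simp only [mem_ofPred_eq, u, w, Fin.sum_univ_three, Matrix.cons_val]
    refine and_congr (by constructor <;> intro h <;> linarith) ?_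
    rw [← mul_lt_mul_iff_right₀ hab]
    constructor <;> intro h <;> linarith
  have hratio : b * √(a + b : ℝ) / √((a + b) * (a * b + b * c + a * c) : ℝ)
      = (√(a * b + b * c + a * c : ℝ) / b)⁻¹ := by
    rw [sqrt_mul hab.le, inv_div]
    field_simp
  rw [hevent, IndepFun.measure_pos_and_mul_lt_of_hasLaw_gaussianReal
    (Real.toNNReal_pos.2 hab).ne' (Real.toNNReal_pos.2 (mul_pos hab hS)).ne' hX hZ hXZ,
    Real.coe_toNNReal _ hab.le, Real.coe_toNNReal _ (mul_pos hab hS).le, hratio,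
    arctan_inv_of_pos (by positivity)]
  congr 1
  ring

theorem gaussian_three_way_ordering_probability
    {Ω : Type*} [MeasureSpace Ω] [IsProbabilityMeasure (ℙ : Measure Ω)]
    (a b c : ℝ≥0) (ha : 0 < a) (hb : 0 < b) (hc : 0 < c)
    (Na Nb Nc : Ω → ℝ)
    (hNa : Measure.map Na ℙ = gaussianReal 0 a)
    (hNb : Measure.map Nb ℙ = gaussianReal 0 b)
    (hNc : Measure.map Nc ℙ = gaussianReal 0 c)
    (hindep : iIndepFun ![Na, Nb, Nc] ℙ) :
    ℙ {ω | Nb ω < Na ω ∧ Nc ω < Nb ω}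
      = ENNReal.ofReal
          ((1 / (2 * π)) * arctan (Real.sqrt ((a : ℝ) * b + b * c + a * c) / b)) :=
  gaussian_three_way_ordering_probability_general a b c ha hb Na Nb Nc hNa hNb hNc hindep
end
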